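/- Let h : ℝ^N → ℝ be given by h(z) = (1/2)‖Xz − b‖₂². Then for every j and every z ∈ ℝ^N, the third partial derivative of z ↦ e^{−h(z)} with respect to z_j satisfies |∂³/∂z_j³ e^{−h(z)}| ≤ 6·c₀·((XᵀX)_{jj})^{3/2}, where c₀ = (1/2)e^{−√3/2}(3^{1/4}+3^{−1/4}). -/

import Mathlib

open Matrix

/-!
Along the coordinate line `t ↦ update z j t`, `h` is a quadratic `a/2 t² + b t + c` with
`a = (XᵀX)_jj`, so the third derivative of `e^{-h}` is `(3aw - w³) e^{-h}` with `w = h_j`.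
Since `h ≥ 0`, the discriminant is nonpositive, i.e. `w² ≤ 2 a h`; with `r = √(2h)` the
derivative is therefore at most `a^{3/2} (3r + r³) e^{-r²/2}`. This function of `r ≥ 0` has
derivative `(3 - r⁴) e^{-r²/2}`, so its maximum is attained at `r = 3^{1/4}`, where it equals `6c₀`.
-/

open Real

lemma hasDerivAt_cubic_mul_exp_neg_sq (r : ℝ) :
    HasDerivAt (fun r => (3 * r + r ^ 3) * exp (-(r ^ 2 / 2)))
      ((3 - r ^ 4) * exp (-(r ^ 2 / 2))) r := by
  have hq : HasDerivAt (fun r => -(r ^ 2 / 2)) (-r) r :=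
    ((hasDerivAt_pow 2 r).div_const 2).neg.congr_deriv (by ring)
  exact (((hasDerivAt_id r).const_mul 3).add (hasDerivAt_pow 3 r)).mul hq.exp
    |>.congr_deriv (by norm_num; ring)

lemma cubic_mul_exp_neg_sq_le {q r : ℝ} (hq : 0 ≤ q) (hq4 : q ^ 4 = 3) (hr : 0 ≤ r) :
    (3 * r + r ^ 3) * exp (-(r ^ 2 / 2)) ≤ (3 * q + q ^ 3) * exp (-(q ^ 2 / 2)) := by
  set g : ℝ → ℝ := fun r => (3 * r + r ^ 3) * exp (-(r ^ 2 / 2))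
  have hg : Differentiable ℝ g := fun r => (hasDerivAt_cubic_mul_exp_neg_sq r).differentiableAt
  have hg' : ∀ r, deriv g r = (3 - r ^ 4) * exp (-(r ^ 2 / 2)) :=
    fun r => (hasDerivAt_cubic_mul_exp_neg_sq r).deriv
  show g r ≤ g q
  rcases le_total r q with hrq | hqr
  · refine monotoneOn_of_deriv_nonneg (convex_Icc 0 q) hg.continuous.continuousOn
      hg.differentiableOn (fun s hs => ?_) ⟨hr, hrq⟩ ⟨hq, le_rfl⟩ hrq
    rw [interior_Icc] at hs
    have : s ^ 4 ≤ q ^ 4 := pow_le_pow_left₀ hs.1.le hs.2.le 4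
    exact hg' s ▸ mul_nonneg (by linarith) (exp_pos _).le
  · refine antitoneOn_of_deriv_nonpos (convex_Ici q) hg.continuous.continuousOn
      hg.differentiableOn (fun s hs => ?_) Set.self_mem_Ici hqr hqr
    rw [interior_Ici] at hs
    have : q ^ 4 ≤ s ^ 4 := pow_le_pow_left₀ hq (le_of_lt hs) 4
    exact hg' s ▸ mul_nonpos_of_nonpos_of_nonneg (by linarith) (exp_pos _).le

lemma three_rpow_quarter_pow_four : ((3 : ℝ) ^ ((1 : ℝ) / 4)) ^ 4 = 3 := by
  rw [← rpow_natCast, ← rpow_mul (by norm_num)]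
  norm_num

lemma six_mul_c₀_eq_cubic_mul_exp_neg_sq (q : ℝ) (hq : q = (3 : ℝ) ^ ((1 : ℝ) / 4)) :
    6 * ((1 / 2) * exp (-√3 / 2) * ((3 : ℝ) ^ ((1 : ℝ) / 4) + (3 : ℝ) ^ (-(1 : ℝ) / 4)))
      = (3 * q + q ^ 3) * exp (-(q ^ 2 / 2)) := by
  have hq0 : 0 < q := hq ▸ rpow_pos_of_pos (by norm_num) _
  have hq4 : q ^ 4 = 3 := hq ▸ three_rpow_quarter_pow_four
  have hsqrt : √3 = q ^ 2 := by
    rw [← hq4, show q ^ 4 = (q ^ 2) ^ 2 by ring, sqrt_sq (by positivity)]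
  have hinv : (3 : ℝ) ^ (-(1 : ℝ) / 4) = q⁻¹ := by
    rw [hq, neg_div, rpow_neg (by norm_num)]
  rw [hsqrt, hinv, ← hq, neg_div]
  field_simp
  linear_combination (-2) * hq4

section Gaussian

variable (a b c : ℝ)

lemma hasDerivAt_mul_exp_neg_quadratic {p : ℝ → ℝ} {p' x : ℝ} (hp : HasDerivAt p p' x) :
    HasDerivAt (fun t => p t * exp (-(a / 2 * t ^ 2 + b * t + c)))
      ((p' - (a * x + b) * p x) * exp (-(a / 2 * x ^ 2 + b * x + c))) x := by
  have hq : HasDerivAt (fun t => -(a / 2 * t ^ 2 + b * t + c)) (-(a * x + b)) x :=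
    ((((hasDerivAt_pow 2 x).const_mul (a / 2)).add
      ((hasDerivAt_id x).const_mul b)).add_const c).neg.congr_deriv (by norm_num; ring)
  exact (hp.mul hq.exp).congr_deriv (by ring)

lemma iteratedDeriv_three_exp_neg_quadratic (x : ℝ) :
    iteratedDeriv 3 (fun t => exp (-(a / 2 * t ^ 2 + b * t + c))) x
      = (3 * a * (a * x + b) - (a * x + b) ^ 3) * exp (-(a / 2 * x ^ 2 + b * x + c)) := by
  have h1 : deriv (fun t => exp (-(a / 2 * t ^ 2 + b * t + c)))
      = fun t => -(a * t + b) * exp (-(a / 2 * t ^ 2 + b * t + c)) := by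
    funext t
    simpa using (hasDerivAt_mul_exp_neg_quadratic a b c (hasDerivAt_const t 1)).deriv
  have h2 : deriv (fun t => -(a * t + b) * exp (-(a / 2 * t ^ 2 + b * t + c)))
      = fun t => ((a * t + b) ^ 2 - a) * exp (-(a / 2 * t ^ 2 + b * t + c)) := by
    funext t
    have hp : HasDerivAt (fun t => -(a * t + b)) (-a) t :=
      (((hasDerivAt_id t).const_mul a).add_const b).neg.congr_deriv (by ring)
    rw [(hasDerivAt_mul_exp_neg_quadratic a b c hp).deriv]
    ring
  have hp : HasDerivAt (fun t => (a * t + b) ^ 2 - a) (2 * (a * x + b) * a) x :=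
    ((((hasDerivAt_id x).const_mul a).add_const b).pow 2).sub_const a |>.congr_deriv (by norm_num)
  rw [iteratedDeriv_succ', iteratedDeriv_succ', iteratedDeriv_one, h1, h2,
    (hasDerivAt_mul_exp_neg_quadratic a b c hp).deriv]
  ring

lemma sq_deriv_le_of_quadratic_nonneg (hq : ∀ t, 0 ≤ a / 2 * t ^ 2 + b * t + c) (x : ℝ) :
    (a * x + b) ^ 2 ≤ 2 * a * (a / 2 * x ^ 2 + b * x + c) := by
  have := discrim_le_zero (a := a / 2) (b := a * x + b) (c := a / 2 * x ^ 2 + b * x + c)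
    fun s => by linear_combination hq (x + s)
  rw [discrim] at this
  linarith

lemma abs_iteratedDeriv_three_exp_neg_quadratic_le {q : ℝ} (hq : 0 ≤ q) (hq4 : q ^ 4 = 3)
    (ha : 0 ≤ a) (hnonneg : ∀ t, 0 ≤ a / 2 * t ^ 2 + b * t + c) (x : ℝ) :
    |iteratedDeriv 3 (fun t => exp (-(a / 2 * t ^ 2 + b * t + c))) x|
      ≤ (3 * q + q ^ 3) * exp (-(q ^ 2 / 2)) * a ^ ((3 : ℝ) / 2) := by
  rw [iteratedDeriv_three_exp_neg_quadratic]
  set v := a * x + b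
  set H := a / 2 * x ^ 2 + b * x + c
  set r := √(2 * H)
  have ha32 : a ^ ((3 : ℝ) / 2) = √a ^ 3 := by
    rw [rpow_div_two_eq_sqrt _ ha, ← rpow_natCast]
    norm_num
  set s := √a
  have hs2 : s ^ 2 = a := sq_sqrt ha
  have hH : 0 ≤ H := hnonneg x
  have hvH : v ^ 2 ≤ 2 * a * H := sq_deriv_le_of_quadratic_nonneg a b c hnonneg x
  have hv : |v| ≤ r * s := by
    rw [← sqrt_mul (by linarith)]
    exact abs_le_sqrt (by linarith)
  have hexp : exp (-H) = exp (-(r ^ 2 / 2)) := by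
    rw [sq_sqrt (by linarith)]
    ring_nf
  calc |(3 * a * v - v ^ 3) * exp (-H)|
      ≤ (3 * a * |v| + |v| ^ 3) * exp (-(r ^ 2 / 2)) := by
        rw [abs_mul, abs_of_pos (exp_pos _), hexp]
        gcongr
        calc |3 * a * v - v ^ 3| ≤ |3 * a * v| + |v ^ 3| := abs_sub _ _
          _ = 3 * a * |v| + |v| ^ 3 := by rw [abs_mul, abs_pow, abs_of_nonneg (by positivity)]
    _ ≤ (3 * s ^ 2 * (r * s) + (r * s) ^ 3) * exp (-(r ^ 2 / 2)) := by
        rw [hs2]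
        gcongr
    _ = s ^ 3 * ((3 * r + r ^ 3) * exp (-(r ^ 2 / 2))) := by ring
    _ ≤ s ^ 3 * ((3 * q + q ^ 3) * exp (-(q ^ 2 / 2))) := by
        gcongr s ^ 3 * ?_
        exact cubic_mul_exp_neg_sq_le hq hq4 (sqrt_nonneg _)
    _ = (3 * q + q ^ 3) * exp (-(q ^ 2 / 2)) * a ^ ((3 : ℝ) / 2) := by rw [ha32]; ring

end Gaussian

lemma half_sum_sq_affine {ι : Type*} [Fintype ι] (α β : ι → ℝ) (t : ℝ) :
    (1 / 2) * ∑ k, (α k * t + β k) ^ 2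
      = (∑ k, α k ^ 2) / 2 * t ^ 2 + (∑ k, α k * β k) * t + (1 / 2) * ∑ k, β k ^ 2 := by
  simp only [Finset.mul_sum, Finset.sum_mul, Finset.sum_div, ← Finset.sum_add_distrib]
  exact Finset.sum_congr rfl fun k _ => by ring

lemma Matrix.mulVec_update_apply {m n : Type*} [Fintype n] [DecidableEq n] (M : Matrix m n ℝ)
    (z : n → ℝ) (j : n) (t : ℝ) (i : m) :
    (M *ᵥ Function.update z j t) i = (M *ᵥ z) i + M i j * (t - z j) := by
  rw [Pi.update_eq_sub_add_single, mulVec_add, mulVec_sub, mulVec_single, mulVec_single]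
  simp only [Pi.add_apply, Pi.sub_apply, Pi.smul_apply, col_apply, op_smul_eq_mul]
  ring

theorem stmt_5 (κ N : ℕ) (X : Matrix (Fin κ) (Fin N) ℝ) (b : Fin κ → ℝ)
    (h : (Fin N → ℝ) → ℝ)
    (hh : ∀ z, h z = (1 / 2) * ∑ k, (X.mulVec z k - b k) ^ 2)
    (j : Fin N) (z : Fin N → ℝ) :
    |iteratedDeriv 3 (fun t : ℝ => Real.exp (-(h (Function.update z j t)))) (z j)|
      ≤ 6 * ((1 / 2) * Real.exp (-Real.sqrt 3 / 2) *
          ((3 : ℝ) ^ ((1 : ℝ) / 4) + (3 : ℝ) ^ (-(1 : ℝ) / 4)))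
        * ((Xᵀ * X) j j) ^ ((3 : ℝ) / 2) := by
  set β : Fin κ → ℝ := fun k => (X *ᵥ z) k - b k - X k j * z j
  set A := ∑ k, X k j ^ 2
  set B := ∑ k, X k j * β k
  set C := (1 / 2) * ∑ k, β k ^ 2
  have hline : ∀ t, h (Function.update z j t) = A / 2 * t ^ 2 + B * t + C := fun t => by
    rw [hh, ← half_sum_sq_affine]
    exact congrArg _ (Finset.sum_congr rfl fun k _ => by rw [mulVec_update_apply]; ring)
  have hnonneg : ∀ t, 0 ≤ A / 2 * t ^ 2 + B * t + C := fun t => by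
    rw [← hline, hh]
    positivity
  have hA : (Xᵀ * X) j j = A := by
    rw [mul_apply]
    exact Finset.sum_congr rfl fun k _ => by rw [transpose_apply, sq]
  simp_rw [hline, hA, six_mul_c₀_eq_cubic_mul_exp_neg_sq _ rfl]
  exact abs_iteratedDeriv_three_exp_neg_quadratic_le A B C (by positivity)
    three_rpow_quarter_pow_four (by positivity) hnonneg (z j)
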